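/- Let {(x₁,y₁),…,(xₙ,yₙ)} with each xᵢ, yᵢ ∈ {0,1}* be an instance of Post's correspondence problem. Over the datatype signature bool = True | False, bitstring = e | 0(tail₀: bitstring) | 1(tail₁: bitstring), dummy = f(b₁: bitstring, b₂: bitstring) | g(h: bool), write p_x(t) for the term prepending the bit string x to the term t (e.g. p₁₀₁(t) = 1(0(1(t)))), and define φ₁ ≡ ⋀_{i=1}^n h(f(p_{xᵢ}(e), p_{yᵢ}(e))) = True, φ₂ ≡ ∀u,v. h(f(u,v)) = True → ⋀_{i=1}^n h(f(p_{xᵢ}(u), p_{yᵢ}(v))) = True, and φ₃ ≡ ∃u. h(f(u,u)) = True. Then the sentence φ₁ ∧ φ₂ → φ₃ is valid in the theory of datatypes (standard selector semantics) if and only if the instance has a solution, i.e. there exist k ≥ 1 and indices i₁,…,i_k ∈ {1,…,n} such that x_{i₁}⋯x_{i_k} = y_{i₁}⋯y_{i_k}. -/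
import Mathlib


set_option linter.unusedVariables false

/-! The concrete (co)datatype signature
`bool = True | False`,
`bitstring = e | 0(tail₀: bitstring) | 1(tail₁: bitstring)`,
`dummy = f(b₁: bitstring, b₂: bitstring) | g(h: bool)`.
As datatypes, `bool` is interpreted as `Bool`, `bitstring` as the finite bit
strings `List Bool` (`0` is `false`, `1` is `true`, a string is represented with
its first bit at the head) and `dummy` as `(List Bool × List Bool) ⊕ Bool`. -/

/-- Finite bit strings: the interpretation of the datatype `bitstring`. -/
abbrev Bits := List Bool

/-- The interpretation of the datatype `dummy`: either `f(b₁, b₂)` or `g(h)`. -/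
abbrev Dummy := (Bits × Bits) ⊕ Bool

mutual
/-- Terms of sort `bool`. -/
inductive TB : Type
  | var (n : ℕ) : TB
  | tt : TB
  | ff : TB
  | selH (t : TD) : TB
/-- Terms of sort `bitstring`. -/
inductive TS : Type
  | var (n : ℕ) : TS
  | eps : TS
  | b0 (t : TS) : TS
  | b1 (t : TS) : TS
  | selT0 (t : TS) : TS
  | selT1 (t : TS) : TS
  | selB1 (t : TD) : TS
  | selB2 (t : TD) : TS
/-- Terms of sort `dummy`. -/
inductive TD : Type
  | var (n : ℕ) : TD
  | fc (a b : TS) : TD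
  | gc (b : TB) : TD
end

/-- First-order formulae over the signature, with sorted variables and
quantifiers. -/
inductive Fm : Type
  | eqB (a b : TB) : Fm
  | eqS (a b : TS) : Fm
  | eqD (a b : TD) : Fm
  | not (φ : Fm) : Fm
  | and (φ ψ : Fm) : Fm
  | or (φ ψ : Fm) : Fm
  | imp (φ ψ : Fm) : Fm
  | exB (n : ℕ) (φ : Fm) : Fm
  | exS (n : ℕ) (φ : Fm) : Fm
  | exD (n : ℕ) (φ : Fm) : Fm
  | allB (n : ℕ) (φ : Fm) : Fm
  | allS (n : ℕ) (φ : Fm) : Fm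
  | allD (n : ℕ) (φ : Fm) : Fm

/-- A structure of datatypes over this signature (standard selector semantics):
the domains and constructors are fixed; the selectors `tail₀, tail₁` (of the
`bitstring` constructors `0` and `1`) and `b₁, b₂, h` (of the `dummy`
constructors `f` and `g`) are arbitrary functions satisfying the selector
equations on trees built with the right constructor. -/
structure Model where
  t0 : Bits → Bits
  t1 : Bits → Bits
  s1 : Dummy → Bits
  s2 : Dummy → Bits
  sh : Dummy → Bool
  ht0 : ∀ t : Bits, t0 (false :: t) = t
  ht1 : ∀ t : Bits, t1 (true :: t) = t
  hs1 : ∀ a b : Bits, s1 (Sum.inl (a, b)) = a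
  hs2 : ∀ a b : Bits, s2 (Sum.inl (a, b)) = b
  hsh : ∀ b : Bool, sh (Sum.inr b) = b

/-- A valuation of the sorted variables. -/
structure Valn where
  vb : ℕ → Bool
  vs : ℕ → Bits
  vd : ℕ → Dummy

mutual
/-- Evaluation of `bool` terms. -/
def evalB (M : Model) (ρ : Valn) : TB → Bool
  | .var n => ρ.vb n
  | .tt => true
  | .ff => false
  | .selH t => M.sh (evalD M ρ t)
/-- Evaluation of `bitstring` terms. -/
def evalS (M : Model) (ρ : Valn) : TS → Bits
  | .var n => ρ.vs n
  | .eps => []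
  | .b0 t => false :: evalS M ρ t
  | .b1 t => true :: evalS M ρ t
  | .selT0 t => M.t0 (evalS M ρ t)
  | .selT1 t => M.t1 (evalS M ρ t)
  | .selB1 t => M.s1 (evalD M ρ t)
  | .selB2 t => M.s2 (evalD M ρ t)
/-- Evaluation of `dummy` terms. -/
def evalD (M : Model) (ρ : Valn) : TD → Dummy
  | .var n => ρ.vd n
  | .fc a b => Sum.inl (evalS M ρ a, evalS M ρ b)
  | .gc b => Sum.inr (evalB M ρ b)
end

/-- Satisfaction of a formula in a structure of datatypes under a valuation. -/
def Sat (M : Model) (ρ : Valn) : Fm → Prop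
  | .eqB a b => evalB M ρ a = evalB M ρ b
  | .eqS a b => evalS M ρ a = evalS M ρ b
  | .eqD a b => evalD M ρ a = evalD M ρ b
  | .not φ => ¬ Sat M ρ φ
  | .and φ ψ => Sat M ρ φ ∧ Sat M ρ ψ
  | .or φ ψ => Sat M ρ φ ∨ Sat M ρ ψ
  | .imp φ ψ => Sat M ρ φ → Sat M ρ ψ
  | .exB n φ => ∃ b : Bool, Sat M { ρ with vb := Function.update ρ.vb n b } φ
  | .exS n φ => ∃ s : Bits, Sat M { ρ with vs := Function.update ρ.vs n s } φ
  | .exD n φ => ∃ d : Dummy, Sat M { ρ with vd := Function.update ρ.vd n d } φ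
  | .allB n φ => ∀ b : Bool, Sat M { ρ with vb := Function.update ρ.vb n b } φ
  | .allS n φ => ∀ s : Bits, Sat M { ρ with vs := Function.update ρ.vs n s } φ
  | .allD n φ => ∀ d : Dummy, Sat M { ρ with vd := Function.update ρ.vd n d } φ

/-- Validity in the theory of datatypes: truth in every structure under every
valuation. -/
def ValidData (φ : Fm) : Prop := ∀ (M : Model) (ρ : Valn), Sat M ρ φ

/-- Satisfiability in the theory of datatypes. -/
def SatData (φ : Fm) : Prop := ∃ (M : Model) (ρ : Valn), Sat M ρ φ

/-- `p_x(t)`: the term prepending the bit string `x` to the term `t`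
(e.g. `p₁₀₁(t) = 1(0(1(t)))`, where `0 = false` and `1 = true`). -/
def prependTm (x : Bits) (t : TS) : TS :=
  x.foldr (fun b acc => if b then TS.b1 acc else TS.b0 acc) t

/-- The atomic formula `h(f(a, b)) = True`. -/
def hEq (a b : TS) : Fm := Fm.eqB (TB.selH (TD.fc a b)) TB.tt

/-- Finite conjunction of a list of formulae (`⊤` is rendered as `True = True`). -/
def conj (l : List Fm) : Fm := l.foldr Fm.and (Fm.eqB TB.tt TB.tt)

/-- `φ₁ ≡ ⋀_{i=1}^n h(f(p_{xᵢ}(e), p_{yᵢ}(e))) = True`. -/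
def phi1 (ps : List (Bits × Bits)) : Fm :=
  conj (ps.map fun p => hEq (prependTm p.1 TS.eps) (prependTm p.2 TS.eps))

/-- `φ₂ ≡ ∀u,v. h(f(u,v)) = True → ⋀_{i=1}^n h(f(p_{xᵢ}(u), p_{yᵢ}(v))) = True`,
with `u` the `bitstring` variable `0` and `v` the `bitstring` variable `1`. -/
def phi2 (ps : List (Bits × Bits)) : Fm :=
  Fm.allS 0 (Fm.allS 1 (Fm.imp (hEq (TS.var 0) (TS.var 1))
    (conj (ps.map fun p => hEq (prependTm p.1 (TS.var 0)) (prependTm p.2 (TS.var 1))))))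

/-- `φ₃ ≡ ∃u. h(f(u,u)) = True`. -/
def phi3 : Fm := Fm.exS 0 (hEq (TS.var 0) (TS.var 0))

lemma eval_prepend (M : Model) (ρ : Valn) (x : Bits) (t : TS) :
    evalS M ρ (prependTm x t) = x ++ evalS M ρ t := by
  induction x with
  | nil => rfl
  | cons b x ih =>
    cases b <;> simp [prependTm, List.foldr] at * <;> simp [evalS, ih]

lemma sat_conj (M : Model) (ρ : Valn) (l : List Fm) :
    Sat M ρ (conj l) ↔ ∀ φ ∈ l, Sat M ρ φ := by
  induction l with
  | nil => simp [conj, Sat]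
  | cons a l ih => simp [conj, Sat] at *; simp [ih]

/-- For every instance `{(x₁,y₁),…,(xₙ,yₙ)}` of Post's
correspondence problem (given as a list of pairs of bit strings), the sentence
`φ₁ ∧ φ₂ → φ₃` is valid in the theory of datatypes (standard selector semantics)
if and only if the instance has a solution, i.e. there is a nonempty sequence of
indices `i₁, …, i_k` with `x_{i₁}⋯x_{i_k} = y_{i₁}⋯y_{i_k}`. -/
theorem pcp_reduction (ps : List (Bits × Bits)) :
    ValidData (Fm.imp (Fm.and (phi1 ps) (phi2 ps)) phi3) ↔
    ∃ is : List (Fin ps.length), is ≠ [] ∧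
      (is.map fun i => (ps.get i).1).flatten = (is.map fun i => (ps.get i).2).flatten := by
  classical
  set P : Bits → Bits → Prop := fun u v =>
    ∃ is : List (Fin ps.length), is ≠ [] ∧
      u = (is.map fun i => (ps.get i).1).flatten ∧
      v = (is.map fun i => (ps.get i).2).flatten with hP
  constructor
  · intro hval
    let M : Model :=
      { t0 := fun l => match l with | false :: t => t | _ => []
        t1 := fun l => match l with | true :: t => t | _ => []
        s1 := fun d => match d with | .inl p => p.1 | _ => []
        s2 := fun d => match d with | .inl p => p.2 | _ => []
        sh := fun d => match d with | .inl p => decide (P p.1 p.2) | .inr b => b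
        ht0 := fun t => rfl
        ht1 := fun t => rfl
        hs1 := fun a b => rfl
        hs2 := fun a b => rfl
        hsh := fun b => rfl }
    let ρ : Valn := ⟨fun _ => false, fun _ => [], fun _ => Sum.inl ([], [])⟩
    have h1 : Sat M ρ (phi1 ps) := by
      rw [phi1, sat_conj]
      intro φ hφ
      rw [List.mem_map] at hφ
      obtain ⟨p, hp, rfl⟩ := hφ
      show evalB M ρ _ = _
      simp only [evalB, evalD, evalS, eval_prepend]
      obtain ⟨i, rfl⟩ := List.get_of_mem hp
      have hPi : P (ps.get i).1 (ps.get i).2 :=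
        ⟨[i], by simp, by simp, by simp⟩
      simpa [M, evalS] using hPi
    have h2 : Sat M ρ (phi2 ps) := by
      intro s s'
      intro hyp
      rw [sat_conj]
      intro φ hφ
      rw [List.mem_map] at hφ
      obtain ⟨p, hp, rfl⟩ := hφ
      obtain ⟨i, rfl⟩ := List.get_of_mem hp
      have hss' : P s s' := by
        have := hyp
        simp only [hEq, Sat, evalB, evalD, evalS, Function.update] at this
        simpa [M] using this
      obtain ⟨is, hne, hu, hv⟩ := hss'
      show evalB M _ _ = _
      simp only [evalB, evalD, evalS, eval_prepend, Function.update]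
      have hPi : P ((ps.get i).1 ++ s) ((ps.get i).2 ++ s') :=
        ⟨i :: is, by simp, by simp [hu], by simp [hv]⟩
      simpa [M] using hPi
    have h3 := hval M ρ ⟨h1, h2⟩
    obtain ⟨s, hs⟩ := h3
    simp only [hEq, Sat, evalB, evalD, evalS, Function.update] at hs
    have : P s s := by simpa [M] using hs
    obtain ⟨is, hne, hu, hv⟩ := this
    exact ⟨is, hne, hu ▸ hv ▸ rfl⟩
  · rintro ⟨is, hne, heq⟩ M ρ ⟨h1, h2⟩
    have key : ∀ js : List (Fin ps.length), js ≠ [] →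
        M.sh (Sum.inl ((js.map fun i => (ps.get i).1).flatten,
          (js.map fun i => (ps.get i).2).flatten)) = true := by
      intro js
      induction js with
      | nil => intro h; exact absurd rfl h
      | cons j js ih =>
        intro _
        cases js with
        | nil =>
          rw [phi1, sat_conj] at h1
          have hmem : hEq (prependTm (ps.get j).1 TS.eps) (prependTm (ps.get j).2 TS.eps)
              ∈ ps.map fun p => hEq (prependTm p.1 TS.eps) (prependTm p.2 TS.eps) :=
            List.mem_map.mpr ⟨ps.get j, List.mem_iff_get.mpr ⟨j, rfl⟩, rfl⟩
          have := h1 _ hmem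
          simp only [hEq, Sat, evalB, evalD, evalS, eval_prepend] at this
          simpa using this
        | cons k js' =>
          have ihr := ih (by simp)
          have h2' := h2 ((((k :: js').map fun i => (ps.get i).1).flatten))
            (((k :: js').map fun i => (ps.get i).2).flatten)
          have := h2' (by
            simp only [hEq, Sat, evalB, evalD, evalS, Function.update]
            simpa using ihr)
          rw [sat_conj] at this
          have hmem : hEq (prependTm (ps.get j).1 (TS.var 0)) (prependTm (ps.get j).2 (TS.var 1))
              ∈ ps.map fun p => hEq (prependTm p.1 (TS.var 0)) (prependTm p.2 (TS.var 1)) :=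
            List.mem_map.mpr ⟨ps.get j, List.mem_iff_get.mpr ⟨j, rfl⟩, rfl⟩
          have := this _ hmem
          simp only [hEq, Sat, evalB, evalD, evalS, eval_prepend, Function.update] at this
          simpa using this
    have := key is hne
    refine ⟨(is.map fun i => (ps.get i).1).flatten, ?_⟩
    simp only [hEq, Sat, evalB, evalD, evalS, Function.update]
    rw [heq] at this ⊢
    simpa using this
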